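/- Let m ≥ 3 and let n be a positive even integer with 2^m < n ≤ 2^{m+1}. Then ‖n‖₂ = m + 2 if n is of one of the following forms: (a) n = 2^{m₁} + 2^{m₂} + 2^{m₃} with m = m₁ > m₂ > m₃ ≥ 1; (b) n = 2^{m₁} + 2^{m₂} + 2^{m₃} + 2^{m₄} with m = m₁ > m₂ > m₃ > m₄ ≥ 2 and m₁ + m₄ = m₂ + m₃; (c) n = 2^{m₁} + 2^{m₁−3} + 2^{m₂} + 2^{m₂−1} with m = m₁ ≥ m₂ + 3 ≥ 6; (d) n = 2^m + 2^{m−5} + 2^{m−6} + 2^{m−7} with m ≥ 10. -/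

import Mathlib

/-!
A representation with `k` twos has value at most `2 ^ k`, and induction on the representation
shows that the values above `2 ^ (k - 1)` reachable with `k` twos are of the form
`2 ^ (k - 1) + 2 ^ j`: a sum exceeding `2 ^ (k - 1)` must add a single `2` to a value near
`2 ^ (k - 1)`, and in a product `(2 ^ p + 2 ^ i) * (2 ^ q + 2 ^ j)` of two such values the
cross terms exceed `2 ^ (p + q)` only if `i = p`, `j = q` or `(i, j) = (p - 1, q - 1)`.
In each of the four forms `n - 2 ^ m` has an isolated lowest binary digit, so it is not a power
of two and `‖n‖₂ ≥ m + 2`. The upper bound comes from the factorizations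
`2 ^ (m₃ - 1) * ((2 ^ (m - m₂ + 1) + 2) * 2 ^ (m₂ - m₃) + 2)`,
`2 ^ (m₄ - 2) * (2 ^ (m₂ - m₄ + 1) + 2) * (2 ^ (m₃ - m₄ + 1) + 2)`,
`2 ^ (m₂ - 3) * 6 * (6 * 2 ^ (m - m₂ - 2) + 2)` and `2 ^ (m - 10) * 10 * 6 * 18`.
-/

/-- `CanRepr l n m` means `n` can be expressed using exactly `m` copies of `l`
    combined with addition and multiplication (and parentheses). -/
inductive CanRepr (l : ℕ) : ℕ → ℕ → Prop
  | base : CanRepr l l 1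
  | add {a b p q : ℕ} : CanRepr l a p → CanRepr l b q → CanRepr l (a + b) (p + q)
  | mul {a b p q : ℕ} : CanRepr l a p → CanRepr l b q → CanRepr l (a * b) (p + q)

/-- The `l`-complexity `‖n‖_l`: the minimal number of `l`'s needed to express `n`
    using only addition and multiplication. (By convention `sInf ∅ = 0`.) -/
noncomputable def complexity (l n : ℕ) : ℕ := sInf {m | CanRepr l n m}

/-- The four special forms of Corollary 7 / Theorem 1.2(2). -/
def GoodForm (m n : ℕ) : Prop :=
  (∃ m₂ m₃, m > m₂ ∧ m₂ > m₃ ∧ 1 ≤ m₃ ∧ n = 2 ^ m + 2 ^ m₂ + 2 ^ m₃) ∨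
  (∃ m₂ m₃ m₄, m > m₂ ∧ m₂ > m₃ ∧ m₃ > m₄ ∧ 2 ≤ m₄ ∧ m + m₄ = m₂ + m₃ ∧
    n = 2 ^ m + 2 ^ m₂ + 2 ^ m₃ + 2 ^ m₄) ∨
  (∃ m₂, m₂ + 3 ≤ m ∧ 6 ≤ m₂ + 3 ∧
    n = 2 ^ m + 2 ^ (m - 3) + 2 ^ m₂ + 2 ^ (m₂ - 1)) ∨
  (10 ≤ m ∧ n = 2 ^ m + 2 ^ (m - 5) + 2 ^ (m - 6) + 2 ^ (m - 7))

theorem add_mul_add_le_mul_two {A B u v : ℕ} (hu : 4 * u ≤ A) (hv : 2 * v ≤ B) :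
    (A + u) * (B + v) ≤ A * B * 2 := by
  nlinarith [Nat.mul_le_mul hu hv, Nat.mul_le_mul_left A hv, Nat.mul_le_mul_right B hu]

theorem exists_two_pow_add_two_pow_mul_eq {p q i j : ℕ} (hi : i ≤ p) (hj : j ≤ q)
    (h : 2 ^ (p + q + 1) < (2 ^ p + 2 ^ i) * (2 ^ q + 2 ^ j)) :
    ∃ r, (2 ^ p + 2 ^ i) * (2 ^ q + 2 ^ j) = 2 ^ (p + q + 1) + 2 ^ r := by
  rcases hi.eq_or_lt with rfl | hi
  · exact ⟨i + j + 1, by ring⟩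
  rcases hj.eq_or_lt with rfl | hj
  · exact ⟨i + j + 1, by ring⟩
  have hu : 2 * 2 ^ i ≤ 2 ^ p := by rw [← pow_succ']; exact Nat.pow_le_pow_right two_pos hi
  have hv : 2 * 2 ^ j ≤ 2 ^ q := by rw [← pow_succ']; exact Nat.pow_le_pow_right two_pos hj
  rw [pow_succ, pow_add] at h
  -- If `i + 2 ≤ p`, the product is at most `(5/4 * 2 ^ p) * (3/2 * 2 ^ q) < 2 ^ (p + q + 1)`.
  obtain rfl : p = i + 1 := by
    by_contra hne
    have : 4 * 2 ^ i ≤ 2 ^ p := by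
      rw [show 4 * 2 ^ i = 2 ^ (i + 2) by ring]; exact Nat.pow_le_pow_right two_pos (by omega)
    exact (add_mul_add_le_mul_two this hv).not_gt h
  obtain rfl : q = j + 1 := by
    by_contra hne
    have : 4 * 2 ^ j ≤ 2 ^ q := by
      rw [show 4 * 2 ^ j = 2 ^ (j + 2) by ring]; exact Nat.pow_le_pow_right two_pos (by omega)
    linarith [add_mul_add_le_mul_two this hu]
  exact ⟨i + j, by ring⟩

theorem two_pow_add_ne_two_pow {c s j : ℕ} (hs : 2 ^ (c + 1) ∣ s) (hs₀ : s ≠ 0) :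
    2 ^ c + s ≠ 2 ^ j := by
  intro h
  have hcj : c < j := by
    rw [← Nat.pow_lt_pow_iff_right one_lt_two, ← h]
    exact Nat.lt_add_of_pos_right (Nat.pos_of_ne_zero hs₀)
  have hdvd : 2 ^ (c + 1) ∣ 2 ^ c := by
    rw [← Nat.dvd_add_left hs, h]
    exact Nat.pow_dvd_pow 2 hcj
  exact absurd (Nat.le_of_dvd (by positivity) hdvd) (by rw [pow_succ]; omega)

namespace CanRepr

variable {l n k : ℕ}

theorem one_le_count (h : CanRepr l n k) : 1 ≤ k := by
  induction h <;> omega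

theorem eq_of_count_one (h : CanRepr l n 1) : n = l := by
  generalize hk : 1 = k at h
  cases h with
  | base => rfl
  | add ha hb | mul ha hb => have := ha.one_le_count; have := hb.one_le_count; omega

theorem le_pow (hl : 2 ≤ l) (h : CanRepr l n k) : n ≤ l ^ k := by
  induction h with
  | base => exact (pow_one l).ge
  | @add a b p q ha hb iha ihb =>
    calc a + b ≤ l ^ p + l ^ q := add_le_add iha ihb
      _ ≤ l ^ p * l ^ q :=
        Nat.add_le_mul (hl.trans (Nat.le_self_pow (Nat.one_le_iff_ne_zero.mp ha.one_le_count) l))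
          (hl.trans (Nat.le_self_pow (Nat.one_le_iff_ne_zero.mp hb.one_le_count) l))
      _ = l ^ (p + q) := (pow_add l p q).symm
  | @mul a b p q _ _ iha ihb =>
    calc a * b ≤ l ^ p * l ^ q := Nat.mul_le_mul iha ihb
      _ = l ^ (p + q) := (pow_add l p q).symm

theorem pow (l p : ℕ) (hp : p ≠ 0) : CanRepr l (l ^ p) p := by
  induction p with
  | zero => exact absurd rfl hp
  | succ p ih =>
    rcases eq_or_ne p 0 with rfl | hp
    · simpa using base
    · simpa [pow_succ, add_comm] using (ih hp).mul base

theorem pow_mul {a p : ℕ} (h : CanRepr l a p) (e : ℕ) : CanRepr l (l ^ e * a) (e + p) := by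
  induction e with
  | zero => simpa using h
  | succ e ih => convert base.mul ih using 1 <;> ring

theorem exists_two_add_eq_two_pow_add_two_pow {b : ℕ} (h : CanRepr 2 b k) (hb : 2 ^ k < 2 + b) :
    ∃ j, 2 + b = 2 ^ k + 2 ^ j := by
  have := h.le_pow le_rfl
  rcases (by omega : 2 + b = 2 ^ k + 2 ^ 0 ∨ 2 + b = 2 ^ k + 2 ^ 1) with h | h <;> exact ⟨_, h⟩

theorem exists_eq_two_pow_add_two_pow (h : CanRepr 2 n (k + 1)) (hn : 2 ^ k < n) :
    ∃ j, n = 2 ^ k + 2 ^ j := by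
  generalize hK : k + 1 = K at h
  induction h generalizing k with
  | base =>
    obtain rfl : k = 0 := by omega
    exact ⟨0, rfl⟩
  | @add a b p q ha hb _ _ =>
    have hpa := ha.le_pow le_rfl
    have hqb := hb.le_pow le_rfl
    obtain ⟨p, rfl⟩ := Nat.exists_eq_add_of_le' ha.one_le_count
    obtain ⟨q, rfl⟩ := Nat.exists_eq_add_of_le' hb.one_le_count
    rcases Nat.eq_zero_or_pos p with rfl | hp
    · obtain rfl := ha.eq_of_count_one
      obtain rfl : k = q + 1 := by omega
      exact hb.exists_two_add_eq_two_pow_add_two_pow hn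
    rcases Nat.eq_zero_or_pos q with rfl | hq
    · obtain rfl := hb.eq_of_count_one
      obtain rfl : k = p + 1 := by omega
      rw [add_comm a] at hn ⊢
      exact ha.exists_two_add_eq_two_pow_add_two_pow hn
    have : 2 ^ p + 2 ^ q ≤ 2 ^ p * 2 ^ q :=
      Nat.add_le_mul (Nat.le_self_pow hp.ne' 2) (Nat.le_self_pow hq.ne' 2)
    rw [show k = p + q + 1 by omega, pow_succ, pow_add] at hn
    rw [pow_succ] at hpa hqb
    omega
  | @mul a b p q ha hb iha ihb =>
    have hpa := ha.le_pow le_rfl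
    have hqb := hb.le_pow le_rfl
    obtain ⟨p, rfl⟩ := Nat.exists_eq_add_of_le' ha.one_le_count
    obtain ⟨q, rfl⟩ := Nat.exists_eq_add_of_le' hb.one_le_count
    obtain rfl : k = p + q + 1 := by omega
    have hp : 2 ^ p < a := by
      by_contra! hle
      exact hn.not_ge ((Nat.mul_le_mul hle hqb).trans_eq (by ring))
    have hq : 2 ^ q < b := by
      by_contra! hle
      exact hn.not_ge ((Nat.mul_le_mul hpa hle).trans_eq (by ring))
    obtain ⟨i, rfl⟩ := iha hp rfl
    obtain ⟨j, rfl⟩ := ihb hq rfl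
    rw [pow_succ, mul_two, add_le_add_iff_left, Nat.pow_le_pow_iff_right one_lt_two] at hpa hqb
    exact exists_two_pow_add_two_pow_mul_eq hpa hqb hn

theorem add_two_le {m : ℕ} (h : CanRepr 2 n k) (hn : 2 ^ m < n)
    (hne : ∀ j, n ≠ 2 ^ m + 2 ^ j) : m + 2 ≤ k := by
  have hmk : m < k := (Nat.pow_lt_pow_iff_right one_lt_two).mp (hn.trans_le (h.le_pow le_rfl))
  rcases (Nat.succ_le_of_lt hmk).eq_or_lt with rfl | hlt
  · obtain ⟨j, rfl⟩ := h.exists_eq_two_pow_add_two_pow hn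
    exact absurd rfl (hne j)
  · exact hlt

end CanRepr

theorem complexity_eq_of_canRepr {l n k : ℕ} (h : CanRepr l n k)
    (hmin : ∀ k', CanRepr l n k' → k ≤ k') : complexity l n = k :=
  le_antisymm (Nat.sInf_le h) (hmin _ (Nat.sInf_mem ⟨k, h⟩))

theorem canRepr_six : CanRepr 2 6 3 := CanRepr.base.add (CanRepr.base.mul .base)

theorem canRepr_1080 : CanRepr 2 1080 12 := by
  have h10 : CanRepr 2 10 4 := CanRepr.base.add (CanRepr.base.mul (CanRepr.base.mul .base))
  have h18 : CanRepr 2 18 5 := CanRepr.base.add (CanRepr.pow 2 4 (by norm_num))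
  exact h10.mul (canRepr_six.mul h18)

section Forms

variable {m m₂ m₃ m₄ : ℕ}

theorem canRepr_formA (h₁ : m₂ < m) (h₂ : m₃ < m₂) (h₃ : 1 ≤ m₃) :
    CanRepr 2 (2 ^ m + 2 ^ m₂ + 2 ^ m₃) (m + 2) := by
  obtain ⟨e, rfl⟩ := Nat.exists_eq_add_of_le' h₃
  obtain ⟨d, rfl⟩ := Nat.exists_eq_add_of_lt h₂
  obtain ⟨d', rfl⟩ := Nat.exists_eq_add_of_lt h₁
  have := ((((CanRepr.pow 2 (d' + 2) (by omega)).add .base).mul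
    (CanRepr.pow 2 (d + 1) (by omega))).add .base).pow_mul e
  convert this using 1 <;> ring

theorem canRepr_formB (h₁ : m₂ < m) (h₂ : m₃ < m₂) (h₃ : m₄ < m₃) (h₄ : 2 ≤ m₄)
    (h₅ : m + m₄ = m₂ + m₃) :
    CanRepr 2 (2 ^ m + 2 ^ m₂ + 2 ^ m₃ + 2 ^ m₄) (m + 2) := by
  obtain ⟨e, rfl⟩ := Nat.exists_eq_add_of_le' h₄
  obtain ⟨c, rfl⟩ := Nat.exists_eq_add_of_lt h₃
  obtain ⟨b, rfl⟩ := Nat.exists_eq_add_of_lt h₂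
  obtain rfl : m = e + 2 * c + b + 5 := by omega
  have := (((CanRepr.pow 2 (c + b + 3) (by omega)).add .base).mul
    ((CanRepr.pow 2 (c + 2) (by omega)).add .base)).pow_mul e
  convert this using 1 <;> ring

theorem canRepr_formC (h₁ : m₂ + 3 ≤ m) (h₂ : 6 ≤ m₂ + 3) :
    CanRepr 2 (2 ^ m + 2 ^ (m - 3) + 2 ^ m₂ + 2 ^ (m₂ - 1)) (m + 2) := by
  obtain ⟨d, rfl⟩ := Nat.exists_eq_add_of_le h₁
  obtain ⟨e, rfl⟩ := Nat.exists_eq_add_of_le' (by omega : 3 ≤ m₂)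
  rw [show e + 3 + 3 + d - 3 = e + d + 3 by omega, show e + 3 - 1 = e + 2 by omega]
  have := (canRepr_six.mul ((canRepr_six.mul (CanRepr.pow 2 (d + 1) (by omega))).add
    .base)).pow_mul e
  convert this using 1 <;> ring

theorem canRepr_formD (h : 10 ≤ m) :
    CanRepr 2 (2 ^ m + 2 ^ (m - 5) + 2 ^ (m - 6) + 2 ^ (m - 7)) (m + 2) := by
  obtain ⟨e, rfl⟩ := Nat.exists_eq_add_of_le' h
  rw [show e + 10 - 5 = e + 5 by omega, show e + 10 - 6 = e + 4 by omega,
    show e + 10 - 7 = e + 3 by omega]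
  convert canRepr_1080.pow_mul e using 1
  ring

end Forms

namespace GoodForm

variable {m n : ℕ}

theorem canRepr (h : GoodForm m n) : CanRepr 2 n (m + 2) := by
  rcases h with ⟨m₂, m₃, h₁, h₂, h₃, rfl⟩ | ⟨m₂, m₃, m₄, h₁, h₂, h₃, h₄, h₅, rfl⟩ |
    ⟨m₂, h₁, h₂, rfl⟩ | ⟨h, rfl⟩
  · exact canRepr_formA h₁ h₂ h₃
  · exact canRepr_formB h₁ h₂ h₃ h₄ h₅
  · exact canRepr_formC h₁ h₂
  · exact canRepr_formD h

theorem exists_eq_two_pow_add (h : GoodForm m n) :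
    ∃ c s, n = 2 ^ m + (2 ^ c + s) ∧ 2 ^ (c + 1) ∣ s ∧ s ≠ 0 := by
  rcases h with ⟨m₂, m₃, h₁, h₂, h₃, rfl⟩ | ⟨m₂, m₃, m₄, h₁, h₂, h₃, h₄, h₅, rfl⟩ |
    ⟨m₂, h₁, h₂, rfl⟩ | ⟨h, rfl⟩
  · exact ⟨m₃, 2 ^ m₂, by ring, Nat.pow_dvd_pow 2 h₂, by positivity⟩
  · refine ⟨m₄, 2 ^ m₂ + 2 ^ m₃, by ring, ?_, by positivity⟩
    exact dvd_add (Nat.pow_dvd_pow 2 (by omega)) (Nat.pow_dvd_pow 2 h₃)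
  · refine ⟨m₂ - 1, 2 ^ (m - 3) + 2 ^ m₂, by ring, ?_, by positivity⟩
    rw [Nat.sub_add_cancel (by omega)]
    exact dvd_add (Nat.pow_dvd_pow 2 (by omega)) dvd_rfl
  · refine ⟨m - 7, 2 ^ (m - 5) + 2 ^ (m - 6), by ring, ?_, by positivity⟩
    exact dvd_add (Nat.pow_dvd_pow 2 (by omega)) (Nat.pow_dvd_pow 2 (by omega))

end GoodForm

theorem stmt_8_general (m n : ℕ) (hform : GoodForm m n) :
    complexity 2 n = m + 2 := by
  obtain ⟨c, s, rfl, hs, hs₀⟩ := hform.exists_eq_two_pow_add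
  refine complexity_eq_of_canRepr hform.canRepr fun k hk => hk.add_two_le ?_ fun j hj => ?_
  · exact Nat.lt_add_of_pos_right (by positivity)
  · exact two_pow_add_ne_two_pow hs hs₀ (Nat.add_left_cancel hj)

theorem stmt_8 (m n : ℕ) (hm : 3 ≤ m) (hn : 0 < n) (heven : 2 ∣ n)
    (hlb : 2 ^ m < n) (hub : n ≤ 2 ^ (m + 1)) (hform : GoodForm m n) :
    complexity 2 n = m + 2 :=
  stmt_8_general m n hform
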